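/- arXiv:2209.06284 — 2 statements merged into one kernel-verified Lean document; each statement's English description precedes it below -/
import Mathlib

section
/- A set $E\subset\mathbb{R}^n$ is weakly porous if and only if its closure $\overline{E}$ is weakly porous. -/
open MeasureTheory Metric Set

noncomputable section

/-- An axis-parallel half-open cube in `ℝⁿ`, given by its lower corner and side length. -/
structure Cube (n : ℕ) where
  a : EuclideanSpace ℝ (Fin n)
  l : ℝ
  pos : 0 < l

/-- The set of points of a cube. -/
def Cube.set {n : ℕ} (P : Cube n) : Set (EuclideanSpace ℝ (Fin n)) :=
  {x | ∀ i, P.a i ≤ x i ∧ x i < P.a i + P.l}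

/-- A weight: locally integrable and a.e. positive. -/
def IsWeight {n : ℕ} (w : EuclideanSpace ℝ (Fin n) → ℝ) : Prop :=
  LocallyIntegrable w volume ∧ ∀ᵐ x ∂(volume : Measure (EuclideanSpace ℝ (Fin n))), 0 < w x

/-- The `A₁` inequality with constant `C`, over all axis-parallel cubes. -/
def A1With {n : ℕ} (w : EuclideanSpace ℝ (Fin n) → ℝ) (C : ℝ) : Prop :=
  ∀ P : Cube n, (⨍ x in P.set, w x) ≤ C * essInf w (volume.restrict P.set)

/-- Membership in the Muckenhoupt class `A₁`. -/
def MemA1 {n : ℕ} (w : EuclideanSpace ℝ (Fin n) → ℝ) : Prop :=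
  IsWeight w ∧ ∃ C : ℝ, A1With w C

/-- The `A_p` inequality with constant `C`, over all axis-parallel cubes. -/
def ApWith {n : ℕ} (w : EuclideanSpace ℝ (Fin n) → ℝ) (p C : ℝ) : Prop :=
  ∀ P : Cube n,
    (⨍ x in P.set, w x) * (⨍ x in P.set, w x ^ (1 / (1 - p))) ^ (p - 1) ≤ C

/-- Membership in the Muckenhoupt class `A_p`. -/
def MemAp {n : ℕ} (w : EuclideanSpace ℝ (Fin n) → ℝ) (p : ℝ) : Prop :=
  IsWeight w ∧ ∃ C : ℝ, ApWith w p C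

/-- `Q` is a dyadic subcube of `P`. -/
def IsDyadicSubcube {n : ℕ} (P Q : Cube n) : Prop :=
  ∃ (j : ℕ) (k : Fin n → ℕ), (∀ i, k i < 2 ^ j) ∧
    Q.l = P.l / 2 ^ j ∧ ∀ i, Q.a i = P.a i + P.l * k i / 2 ^ j

/-- A cube is `E`-free if it does not meet `E`. -/
def EFree {n : ℕ} (E : Set (EuclideanSpace ℝ (Fin n))) (Q : Cube n) : Prop :=
  Q.set ∩ E = ∅

/-- The measure `|𝓜(P)|` of a largest `E`-free dyadic subcube of `P`
(`0` if there is none). -/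
def maxFree {n : ℕ} (E : Set (EuclideanSpace ℝ (Fin n))) (P : Cube n) : ℝ :=
  sSup {v : ℝ | ∃ Q : Cube n, IsDyadicSubcube P Q ∧ EFree E Q ∧ v = (volume Q.set).toReal}

/-- Weak porosity with constants `c`, `δ`. -/
def WeaklyPorousWith {n : ℕ} (E : Set (EuclideanSpace ℝ (Fin n))) (c δ : ℝ) : Prop :=
  ∀ P : Cube n, ∃ (N : ℕ) (Q : Fin N → Cube n),
    (∀ k, IsDyadicSubcube P (Q k) ∧ EFree E (Q k)) ∧
    (∀ k m, k ≠ m → Disjoint (Q k).set (Q m).set) ∧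
    (∀ k, δ * maxFree E P ≤ (volume (Q k).set).toReal) ∧
    c * (volume P.set).toReal ≤ ∑ k, (volume (Q k).set).toReal

/-- A set is weakly porous if it is weakly porous with some constants `0 < c, δ < 1`. -/
def WeaklyPorous {n : ℕ} (E : Set (EuclideanSpace ℝ (Fin n))) : Prop :=
  ∃ c δ : ℝ, 0 < c ∧ c < 1 ∧ 0 < δ ∧ δ < 1 ∧ WeaklyPorousWith E c δ

/-- Porosity. -/
def Porous {n : ℕ} (E : Set (EuclideanSpace ℝ (Fin n))) : Prop :=
  ∃ c : ℝ, 0 < c ∧ ∀ (x : EuclideanSpace ℝ (Fin n)) (r : ℝ), 0 < r →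
    ∃ y : EuclideanSpace ℝ (Fin n), ball y (c * r) ⊆ ball x r \ E

/-- The distance weight `dist(·,E)^{-α}`. -/
def distw {n : ℕ} (E : Set (EuclideanSpace ℝ (Fin n))) (α : ℝ)
    (x : EuclideanSpace ℝ (Fin n)) : ℝ :=
  infDist x E ^ (-α)

/-- `h_E(B(x,R))`: the supremum of radii `t` of balls contained in `B(x,R) \ E`. -/
def hFree {n : ℕ} (E : Set (EuclideanSpace ℝ (Fin n))) (x : EuclideanSpace ℝ (Fin n))
    (R : ℝ) : ℝ :=
  sSup {t : ℝ | ∃ y ∈ ball x R, ball y t ⊆ ball x R \ E}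

/-- The set of admissible exponents in the definition of the Muckenhoupt exponent. -/
def MuckSet {n : ℕ} (E : Set (EuclideanSpace ℝ (Fin n))) : Set ℝ :=
  {α : ℝ | ∃ C : ℝ, ∀ x ∈ E, ∀ R r : ℝ, 0 < r → r < hFree E x R → hFree E x R ≤ R →
    (volume (thickening r E ∩ ball x R)).toReal ≤
      C * (hFree E x R / r) ^ (-α) * (volume (ball x R)).toReal}

open scoped Classical in
/-- The Muckenhoupt exponent of `E`. -/
def MuckExp {n : ℕ} (E : Set (EuclideanSpace ℝ (Fin n))) : ℝ :=
  if ∀ x ∈ E, ∀ R : ℝ, 0 < R → 0 < hFree E x R then sSup (MuckSet E) else 0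

end


/-! A dyadic cube `Q` that misses `E` also misses `closure E` after shrinking it to its dyadic
grandchild `Q.inner`, whose closure lies in the open cube `Q.ioo`. Since `|Q.inner| = 4⁻ⁿ |Q|`, this
gives `maxFree E P ≤ 4ⁿ maxFree (closure E) P`, and shrinking every cube of a weak-porosity family
for `E` yields one for `closure E` with both constants divided by `4ⁿ`. Conversely, a family for
`closure E` is one for `E` as it stands, with `δ` divided by `4ⁿ`. -/

namespace Cube

variable {n : ℕ}

theorem volume_set (P : Cube n) : volume P.set = ENNReal.ofReal (P.l ^ n) := by
  have h : P.set = (MeasurableEquiv.toLp 2 (Fin n → ℝ)).symm ⁻¹'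
      (Set.univ.pi fun i => Set.Ico (P.a i) (P.a i + P.l)) := by
    ext x
    simp [Cube.set, Set.mem_pi, Set.mem_Ico]
  rw [h, (EuclideanSpace.volume_preserving_symm_measurableEquiv_toLp (Fin n)).measure_preimage
    (MeasurableSet.univ_pi fun i => measurableSet_Ico).nullMeasurableSet, volume_pi_pi]
  simp [Real.volume_Ico, ← ENNReal.ofReal_pow P.pos.le]

theorem volume_set_toReal (P : Cube n) : (volume P.set).toReal = P.l ^ n := by
  rw [volume_set, ENNReal.toReal_ofReal (pow_nonneg P.pos.le n)]

def ioo (P : Cube n) : Set (EuclideanSpace ℝ (Fin n)) :=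
  {x | ∀ i, P.a i < x i ∧ x i < P.a i + P.l}

theorem isOpen_ioo (P : Cube n) : IsOpen P.ioo := by
  have h : P.ioo = ⋂ i, {x | P.a i < x i} ∩ {x | x i < P.a i + P.l} := by
    ext x
    simp [ioo]
  rw [h]
  exact isOpen_iInter_of_finite fun i =>
    (isOpen_lt continuous_const (by fun_prop)).inter (isOpen_lt (by fun_prop) continuous_const)

theorem ioo_subset_set (P : Cube n) : P.ioo ⊆ P.set :=
  fun _ hx i => ⟨(hx i).1.le, (hx i).2⟩

/-- The dyadic grandchild `[a + l/4, a + l/2)ⁿ` of `P`: unlike `P.set`, its closure stays inside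
the open cube `P.ioo`. -/
noncomputable def inner (P : Cube n) : Cube n where
  a := WithLp.toLp 2 fun i => P.a i + P.l / 4
  l := P.l / 4
  pos := by linarith [P.pos]

theorem inner_set_subset_ioo (P : Cube n) : P.inner.set ⊆ P.ioo := by
  intro x hx i
  obtain ⟨h₁, h₂⟩ := hx i
  have hl := P.pos
  change P.a i + P.l / 4 ≤ x i at h₁
  change x i < P.a i + P.l / 4 + P.l / 4 at h₂
  constructor <;> linarith

theorem inner_set_subset (P : Cube n) : P.inner.set ⊆ P.set :=
  P.inner_set_subset_ioo.trans P.ioo_subset_set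

theorem volume_inner_set_toReal (P : Cube n) :
    (volume P.inner.set).toReal = (volume P.set).toReal / 4 ^ n := by
  rw [volume_set_toReal, volume_set_toReal, ← div_pow]
  rfl

theorem isDyadicSubcube_inner (P : Cube n) : IsDyadicSubcube P P.inner :=
  ⟨2, fun _ => 1, fun _ => by norm_num, by norm_num [inner], fun i => by
    change P.a i + P.l / 4 = _
    norm_num⟩

end Cube

section

variable {n : ℕ}

theorem IsDyadicSubcube.trans {P Q R : Cube n} (hPQ : IsDyadicSubcube P Q)
    (hQR : IsDyadicSubcube Q R) : IsDyadicSubcube P R := by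
  obtain ⟨j, k, hk, hl, ha⟩ := hPQ
  obtain ⟨j', k', hk', hl', ha'⟩ := hQR
  refine ⟨j + j', fun i => k i * 2 ^ j' + k' i, fun i => ?_, ?_, fun i => ?_⟩
  · calc k i * 2 ^ j' + k' i < (k i + 1) * 2 ^ j' := by nlinarith [hk' i]
      _ ≤ 2 ^ j * 2 ^ j' := Nat.mul_le_mul_right _ (hk i)
      _ = 2 ^ (j + j') := (pow_add 2 j j').symm
  · rw [hl', hl, pow_add, div_div]
  · rw [ha' i, ha i, hl]
    push_cast
    field_simp
    ring

theorem IsDyadicSubcube.l_le {P Q : Cube n} (h : IsDyadicSubcube P Q) : Q.l ≤ P.l := by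
  obtain ⟨j, -, -, hl, -⟩ := h
  rw [hl]
  exact div_le_self P.pos.le (one_le_pow₀ one_le_two)

theorem IsDyadicSubcube.volume_le {P Q : Cube n} (h : IsDyadicSubcube P Q) :
    (volume Q.set).toReal ≤ (volume P.set).toReal := by
  rw [Cube.volume_set_toReal, Cube.volume_set_toReal]
  exact pow_le_pow_left₀ Q.pos.le h.l_le n

theorem EFree.anti {E F : Set (EuclideanSpace ℝ (Fin n))} {Q : Cube n} (hEF : E ⊆ F)
    (h : EFree F Q) : EFree E Q :=
  subset_eq_empty (inter_subset_inter_right _ hEF) h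

theorem EFree.closure_inner {E : Set (EuclideanSpace ℝ (Fin n))} {Q : Cube n} (h : EFree E Q) :
    EFree (closure E) Q.inner := by
  have hQE : Disjoint Q.ioo E :=
    disjoint_iff_inter_eq_empty.2 (subset_eq_empty (inter_subset_inter_left _ Q.ioo_subset_set) h)
  exact disjoint_iff_inter_eq_empty.1
    ((hQE.closure_right Q.isOpen_ioo).mono_left Q.inner_set_subset_ioo)

theorem maxFree_nonneg (E : Set (EuclideanSpace ℝ (Fin n))) (P : Cube n) : 0 ≤ maxFree E P :=
  Real.sSup_nonneg fun _ ⟨_, _, _, hv⟩ => hv ▸ ENNReal.toReal_nonneg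

theorem le_maxFree {E : Set (EuclideanSpace ℝ (Fin n))} {P Q : Cube n} (hPQ : IsDyadicSubcube P Q)
    (hQ : EFree E Q) : (volume Q.set).toReal ≤ maxFree E P :=
  le_csSup ⟨(volume P.set).toReal, fun _ ⟨_, hPR, _, hv⟩ => hv ▸ hPR.volume_le⟩ ⟨Q, hPQ, hQ, rfl⟩

theorem maxFree_le {E : Set (EuclideanSpace ℝ (Fin n))} {P : Cube n} {b : ℝ} (hb : 0 ≤ b)
    (h : ∀ Q, IsDyadicSubcube P Q → EFree E Q → (volume Q.set).toReal ≤ b) : maxFree E P ≤ b :=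
  Real.sSup_le (fun _ ⟨Q, hPQ, hQ, hv⟩ => hv ▸ h Q hPQ hQ) hb

theorem maxFree_anti {E F : Set (EuclideanSpace ℝ (Fin n))} (hEF : E ⊆ F) (P : Cube n) :
    maxFree F P ≤ maxFree E P :=
  maxFree_le (maxFree_nonneg E P) fun _ hPQ hQ => le_maxFree hPQ (hQ.anti hEF)

theorem maxFree_le_four_pow_mul_maxFree_closure (E : Set (EuclideanSpace ℝ (Fin n)))
    (P : Cube n) : maxFree E P ≤ 4 ^ n * maxFree (closure E) P := by
  refine maxFree_le (by positivity [maxFree_nonneg (closure E) P]) fun Q hPQ hQ => ?_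
  have h := le_maxFree (hPQ.trans Q.isDyadicSubcube_inner) hQ.closure_inner
  rw [Q.volume_inner_set_toReal, div_le_iff₀' (by positivity)] at h
  exact h

theorem weaklyPorousWith_closure {E : Set (EuclideanSpace ℝ (Fin n))} {c δ : ℝ}
    (hδ : 0 ≤ δ) (h : WeaklyPorousWith E c δ) :
    WeaklyPorousWith (closure E) (c / 4 ^ n) (δ / 4 ^ n) := by
  intro P
  obtain ⟨N, Q, hfree, hdisj, hbig, hsum⟩ := h P
  refine ⟨N, fun k => (Q k).inner, fun k => ⟨(hfree k).1.trans (Q k).isDyadicSubcube_inner,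
    (hfree k).2.closure_inner⟩, fun k m hkm => ?_, fun k => ?_, ?_⟩
  · exact (hdisj k m hkm).mono (Q k).inner_set_subset (Q m).inner_set_subset
  · rw [(Q k).volume_inner_set_toReal, div_mul_eq_mul_div]
    gcongr
    exact (mul_le_mul_of_nonneg_left (maxFree_anti subset_closure P) hδ).trans (hbig k)
  · simp only [Cube.volume_inner_set_toReal, ← Finset.sum_div, div_mul_eq_mul_div]
    gcongr

theorem weaklyPorousWith_of_closure {E : Set (EuclideanSpace ℝ (Fin n))} {c δ : ℝ}
    (hδ : 0 ≤ δ) (h : WeaklyPorousWith (closure E) c δ) :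
    WeaklyPorousWith E c (δ / 4 ^ n) := by
  intro P
  obtain ⟨N, Q, hfree, hdisj, hbig, hsum⟩ := h P
  refine ⟨N, Q, fun k => ⟨(hfree k).1, (hfree k).2.anti subset_closure⟩, hdisj, fun k => ?_, hsum⟩
  calc δ / 4 ^ n * maxFree E P ≤ δ / 4 ^ n * (4 ^ n * maxFree (closure E) P) := by
        gcongr
        exact maxFree_le_four_pow_mul_maxFree_closure E P
    _ = δ * maxFree (closure E) P := by field_simp
    _ ≤ _ := hbig k

end

/-- `E` is weakly porous if and only if its closure is weakly porous. -/
theorem weaklyPorous_iff_closure {n : ℕ} (E : Set (EuclideanSpace ℝ (Fin n))) :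
    WeaklyPorous E ↔ WeaklyPorous (closure E) := by
  have hdiv : ∀ x : ℝ, 0 < x → x < 1 → 0 < x / 4 ^ n ∧ x / 4 ^ n < 1 := fun x hx₀ hx₁ =>
    ⟨by positivity, (div_le_self hx₀.le (one_le_pow₀ (by norm_num))).trans_lt hx₁⟩
  constructor
  · rintro ⟨c, δ, hc₀, hc₁, hδ₀, hδ₁, h⟩
    obtain ⟨hc₀', hc₁'⟩ := hdiv c hc₀ hc₁
    obtain ⟨hδ₀', hδ₁'⟩ := hdiv δ hδ₀ hδ₁
    exact ⟨_, _, hc₀', hc₁', hδ₀', hδ₁', weaklyPorousWith_closure hδ₀.le h⟩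
  · rintro ⟨c, δ, hc₀, hc₁, hδ₀, hδ₁, h⟩
    obtain ⟨hδ₀', hδ₁'⟩ := hdiv δ hδ₀ hδ₁
    exact ⟨_, _, hc₀, hc₁, hδ₀', hδ₁', weaklyPorousWith_of_closure hδ₀.le h⟩
end

section
/- If $E\subset\mathbb{R}^n$ is bounded, weakly porous and $0<\alpha<\Mu(E)$, then for every $x\in E$ and $R>0$ the upper Minkowski dimension of $E\cap B(x,R)$ is at most $n-\alpha$; in particular $\overline{\dim}_M(E\cap B(x,R))\le n-\Mu(E)<n$. -/
open MeasureTheory Metric Set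

/-- The upper Minkowski dimension of a bounded set, defined through the measure of
its `r`-neighborhoods. -/
noncomputable def upperMinkDim {n : ℕ} (A : Set (EuclideanSpace ℝ (Fin n))) : ℝ :=
  sInf {l : ℝ | 0 ≤ l ∧ ∃ C : ℝ, ∀ r : ℝ, 0 < r → r < diam A →
    (volume (thickening r A)).toReal ≤ C * r ^ ((n : ℝ) - l)}

/-!
For `x ∈ E` and an admissible exponent `β ∈ MuckSet E`, the `r`-neighbourhood of
`E ∩ B(x,R)` lies in `E_r ∩ B(x,2R)` when `r < h_E(B(x,R)) ≤ R`, and the defining inequality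
at scale `2R` bounds its measure by `≲ r^β`; for larger `r` the trivial bound `|B(x,3R)|` is
also `≲ r^β`. So `dim_M(E ∩ B(x,R)) ≤ n - β`, as soon as `β ≤ n`. That last inequality holds
because `B(x,r) ⊆ E_r` has measure `≈ r^n`, which cannot be `≲ r^β` with `β > n`.
-/

open Filter Topology

lemma Real.le_of_mul_rpow_le_mul_rpow {a b c K h : ℝ} (hc : 0 < c) (hh : 0 < h)
    (hle : ∀ r, 0 < r → r < h → c * r ^ a ≤ K * r ^ b) : b ≤ a := by
  by_contra! hab
  have hlim : Tendsto (fun r : ℝ => K * r ^ (b - a)) (𝓝[>] 0) (𝓝 0) := by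
    have := (Real.continuousAt_rpow_const 0 (b - a) (Or.inr (sub_pos.2 hab).le)).tendsto
    simpa [Real.zero_rpow (sub_pos.2 hab).ne'] using
      (this.const_mul K).mono_left nhdsWithin_le_nhds
  obtain ⟨r, hr_small, hr_pos, hrh⟩ :=
    ((hlim.eventually (gt_mem_nhds hc)).and (Ioo_mem_nhdsGT hh)).exists
  have hsplit : K * r ^ b = K * r ^ (b - a) * r ^ a := by
    rw [mul_assoc, ← Real.rpow_add hr_pos, sub_add_cancel]
  nlinarith [hle r hr_pos hrh, Real.rpow_pos_of_pos hr_pos a]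

lemma Real.div_rpow_neg {x y : ℝ} (hx : 0 ≤ x) (hy : 0 ≤ y) (z : ℝ) :
    (x / y) ^ (-z) = y ^ z / x ^ z := by
  rw [Real.rpow_neg_eq_inv_rpow, inv_div, Real.div_rpow hy hx]

lemma Metric.le_of_ball_subset_ball_diff {X : Type*} [PseudoMetricSpace X] {E : Set X}
    {x y : X} {R t : ℝ} (hx : x ∈ E) (hy : y ∈ ball x R) (hsub : ball y t ⊆ ball x R \ E) :
    t ≤ R := by
  by_contra! hRt
  have hxy : x ∈ ball y t := by
    rw [mem_ball, dist_comm]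
    exact (mem_ball.mp hy).trans hRt
  exact (hsub hxy).2 hx

lemma upperMinkDim_le {n : ℕ} {A : Set (EuclideanSpace ℝ (Fin n))} {l C : ℝ} (hl : 0 ≤ l)
    (hC : ∀ r : ℝ, 0 < r → r < diam A →
      (volume (thickening r A)).toReal ≤ C * r ^ ((n : ℝ) - l)) :
    upperMinkDim A ≤ l :=
  csInf_le ⟨0, fun _ hl' => hl'.1⟩ ⟨hl, C, hC⟩

section MuckExp

variable {n : ℕ} {E : Set (EuclideanSpace ℝ (Fin n))} {x : EuclideanSpace ℝ (Fin n)} {R β : ℝ}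

lemma hFree_le (hx : x ∈ E) (hR : 0 < R) : hFree E x R ≤ R :=
  csSup_le ⟨0, x, mem_ball_self hR, by simp⟩ fun _ ⟨_, hy, hsub⟩ =>
    le_of_ball_subset_ball_diff hx hy hsub

lemma hFree_mono (hx : x ∈ E) (hR : 0 < R) {R' : ℝ} (hRR' : R ≤ R') :
    hFree E x R ≤ hFree E x R' := by
  refine csSup_le_csSup ⟨R', fun _ ⟨_, hy, hsub⟩ => le_of_ball_subset_ball_diff hx hy hsub⟩
    ⟨0, x, mem_ball_self hR, by simp⟩ ?_
  rintro t ⟨y, hy, hsub⟩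
  exact ⟨y, ball_subset_ball hRR' hy, hsub.trans (sdiff_subset_sdiff_left (ball_subset_ball hRR'))⟩

lemma zero_mem_MuckSet : (0 : ℝ) ∈ MuckSet E := by
  refine ⟨1, fun x _ R r _ _ _ => ?_⟩
  rw [neg_zero, Real.rpow_zero, mul_one, one_mul]
  exact ENNReal.toReal_mono measure_ball_lt_top.ne (measure_mono inter_subset_right)

lemma hFree_pos_of_MuckExp_pos (hM : 0 < MuckExp E) :
    ∀ x ∈ E, ∀ R : ℝ, 0 < R → 0 < hFree E x R := by
  by_contra hc
  simp only [MuckExp, if_neg hc, lt_self_iff_false] at hM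

lemma MuckExp_eq_sSup (hM : 0 < MuckExp E) : MuckExp E = sSup (MuckSet E) :=
  if_pos (hFree_pos_of_MuckExp_pos hM)

lemma le_of_mem_MuckSet (hβ : β ∈ MuckSet E) (hx : x ∈ E) (hR : 0 < R)
    (hh : 0 < hFree E x R) : β ≤ n := by
  obtain ⟨C, hC⟩ := hβ
  set h := hFree E x R
  have hvol₁ : 0 < (volume (ball (0 : EuclideanSpace ℝ (Fin n)) 1)).toReal :=
    ENNReal.toReal_pos (measure_ball_pos volume 0 one_pos).ne' measure_ball_lt_top.ne
  refine Real.le_of_mul_rpow_le_mul_rpow (K := C / h ^ β * (volume (ball x R)).toReal) hvol₁ hh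
    fun r hr hrh => ?_
  calc (volume (ball (0 : EuclideanSpace ℝ (Fin n)) 1)).toReal * r ^ (n : ℝ)
      = (volume (ball x r)).toReal := by
        rw [Measure.addHaar_ball_of_pos volume x hr, finrank_euclideanSpace_fin,
          ENNReal.toReal_mul, ENNReal.toReal_ofReal (by positivity), Real.rpow_natCast, mul_comm]
    _ ≤ (volume (thickening r E ∩ ball x R)).toReal :=
        ENNReal.toReal_mono (measure_inter_lt_top_of_right_ne_top measure_ball_lt_top.ne).ne
          (measure_mono (subset_inter (ball_subset_thickening hx r)
            (ball_subset_ball (hrh.le.trans (hFree_le hx hR)))))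
    _ ≤ C * (h / r) ^ (-β) * (volume (ball x R)).toReal := hC x hx R r hr hrh (hFree_le hx hR)
    _ = C / h ^ β * (volume (ball x R)).toReal * r ^ β := by
        rw [Real.div_rpow_neg hh.le hr.le]; ring

lemma thickening_inter_ball_subset_ball (r : ℝ) :
    thickening r (E ∩ ball x R) ⊆ ball x (r + R) :=
  (thickening_subset_of_subset r inter_subset_right).trans (thickening_ball x r R)

lemma exists_volume_thickening_inter_ball_le (hβ : β ∈ MuckSet E) (hβ₀ : 0 ≤ β) (hx : x ∈ E)
    (hR : 0 < R) (hh : 0 < hFree E x R) :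
    ∃ C, ∀ r, 0 < r → r < 2 * R →
      (volume (thickening r (E ∩ ball x R))).toReal ≤ C * r ^ β := by
  obtain ⟨C, hC⟩ := hβ
  set h := hFree E x R
  set h₂ := hFree E x (2 * R)
  have hhh₂ : h ≤ h₂ := hFree_mono hx hR (by linarith)
  refine ⟨max (C / h₂ ^ β * (volume (ball x (2 * R))).toReal)
    ((volume (ball x (3 * R))).toReal / h ^ β), fun r hr hr2R => ?_⟩
  have hrβ : 0 ≤ r ^ β := Real.rpow_nonneg hr.le β
  rcases lt_or_ge r h with hrh | hhr
  · have hsub : thickening r (E ∩ ball x R) ⊆ thickening r E ∩ ball x (2 * R) :=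
      subset_inter (thickening_subset_of_subset r inter_subset_left)
        ((thickening_inter_ball_subset_ball r).trans
          (ball_subset_ball (by linarith [hFree_le hx hR] : r + R ≤ 2 * R)))
    calc (volume (thickening r (E ∩ ball x R))).toReal
        ≤ (volume (thickening r E ∩ ball x (2 * R))).toReal :=
          ENNReal.toReal_mono (measure_inter_lt_top_of_right_ne_top measure_ball_lt_top.ne).ne
            (measure_mono hsub)
      _ ≤ C * (h₂ / r) ^ (-β) * (volume (ball x (2 * R))).toReal :=
          hC x hx (2 * R) r hr (hrh.trans_le hhh₂) (hFree_le hx (by linarith))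
      _ = C / h₂ ^ β * (volume (ball x (2 * R))).toReal * r ^ β := by
          rw [Real.div_rpow_neg (hh.trans_le hhh₂).le hr.le]; ring
      _ ≤ _ := mul_le_mul_of_nonneg_right (le_max_left _ _) hrβ
  · have hsub : thickening r (E ∩ ball x R) ⊆ ball x (3 * R) :=
      (thickening_inter_ball_subset_ball r).trans (ball_subset_ball (by linarith : r + R ≤ 3 * R))
    have hhβ : 0 < h ^ β := Real.rpow_pos_of_pos hh β
    calc (volume (thickening r (E ∩ ball x R))).toReal ≤ (volume (ball x (3 * R))).toReal :=
          ENNReal.toReal_mono measure_ball_lt_top.ne (measure_mono hsub)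
      _ = (volume (ball x (3 * R))).toReal / h ^ β * h ^ β := (div_mul_cancel₀ _ hhβ.ne').symm
      _ ≤ (volume (ball x (3 * R))).toReal / h ^ β * r ^ β := by gcongr
      _ ≤ _ := mul_le_mul_of_nonneg_right (le_max_right _ _) hrβ

lemma upperMinkDim_inter_ball_le_sub (hβ : β ∈ MuckSet E) (hβ₀ : 0 ≤ β) (hx : x ∈ E)
    (hR : 0 < R) (hh : 0 < hFree E x R) : upperMinkDim (E ∩ ball x R) ≤ n - β := by
  obtain ⟨C, hC⟩ := exists_volume_thickening_inter_ball_le hβ hβ₀ hx hR hh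
  have hdiam : diam (E ∩ ball x R) ≤ 2 * R :=
    (diam_mono inter_subset_right isBounded_ball).trans (diam_ball hR.le)
  refine upperMinkDim_le (C := C) (sub_nonneg.2 (le_of_mem_MuckSet hβ hx hR hh)) fun r hr hrd => ?_
  rw [sub_sub_cancel]
  exact hC r hr (hrd.trans_le hdiam)

lemma upperMinkDim_inter_ball_le_sub_MuckExp (hM : 0 < MuckExp E) (hx : x ∈ E) (hR : 0 < R) :
    upperMinkDim (E ∩ ball x R) ≤ n - MuckExp E := by
  have hh := hFree_pos_of_MuckExp_pos hM x hx R hR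
  have hdim₀ := upperMinkDim_inter_ball_le_sub zero_mem_MuckSet le_rfl hx hR hh
  suffices sSup (MuckSet E) ≤ n - upperMinkDim (E ∩ ball x R) by
    rw [MuckExp_eq_sSup hM]; linarith
  refine csSup_le ⟨0, zero_mem_MuckSet⟩ fun β hβ => ?_
  rcases le_total 0 β with hβ₀ | hβ₀
  · linarith [upperMinkDim_inter_ball_le_sub hβ hβ₀ hx hR hh]
  · linarith

end MuckExp

theorem upperMinkDim_le_of_weaklyPorous_general {n : ℕ} (E : Set (EuclideanSpace ℝ (Fin n)))
    (α : ℝ) (h0 : 0 < α) (h1 : α < MuckExp E) :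
    ∀ x ∈ E, ∀ R : ℝ, 0 < R →
      upperMinkDim (E ∩ ball x R) ≤ (n : ℝ) - α ∧
      upperMinkDim (E ∩ ball x R) ≤ (n : ℝ) - MuckExp E ∧
      (n : ℝ) - MuckExp E < n := by
  intro x hx R hR
  have hdim := upperMinkDim_inter_ball_le_sub_MuckExp (h0.trans h1) hx hR
  exact ⟨by linarith, hdim, by linarith⟩

/-- If `E ⊆ ℝⁿ` is bounded, weakly porous and `0 < α < Mu(E)`, then for all
`x ∈ E` and `R > 0`, the upper Minkowski dimension of `E ∩ B(x,R)` is at most `n - α`;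
in particular it is at most `n - Mu(E) < n`. -/
theorem upperMinkDim_le_of_weaklyPorous {n : ℕ} (E : Set (EuclideanSpace ℝ (Fin n)))
    (hb : Bornology.IsBounded E) (hwp : WeaklyPorous E)
    (α : ℝ) (h0 : 0 < α) (h1 : α < MuckExp E) :
    ∀ x ∈ E, ∀ R : ℝ, 0 < R →
      upperMinkDim (E ∩ ball x R) ≤ (n : ℝ) - α ∧
      upperMinkDim (E ∩ ball x R) ≤ (n : ℝ) - MuckExp E ∧
      (n : ℝ) - MuckExp E < n :=
  upperMinkDim_le_of_weaklyPorous_general E α h0 h1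
end
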